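/- arXiv:1809.09461 — 3 statements merged into one kernel-verified Lean document; each statement's English description precedes it below -/
import Mathlib

section
/- In $W_n$ for $n \geq 3$, with $m_n = a_{n-1}(x_{n-2})^{x_n}$, $M_n = \langle x_n, m_n, v_{n-3},\dots,v_0\rangle$, $V_n = \langle v_{n-3},\dots,v_0\rangle$, $U_n = V_n^{\langle x_n\rangle}$, and $N_n$ the normal closure of $\langle m_n, v_{n-3},\dots,v_0\rangle$ in $M_n$: the commutator subgroup $M_n'$ is contained in $N_n^{od} := N_n \cap \Phi(W_n)$. -/
/-- Leaves of the complete binary rooted tree of height `n`, recorded as the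
big-endian bit string of the (0-indexed) leaf label. -/
abbrev Leaf (n : ℕ) := Fin n → Bool

/-- The function underlying the standard generator `a k` of `Aut(T_n)`:
it flips coordinate `n - k` of a leaf lying on the leftmost spine above level `n - k`
(this is the permutation `(1, 2^(k-1)+1)(2, 2^(k-1)+2) ⋯ (2^(k-1), 2^k)` of the leaves). -/
def aFun (n k : ℕ) (ℓ : Leaf n) : Leaf n := fun t =>
  if (t : ℕ) = n - k ∧ (∀ s : Fin n, (s : ℕ) < n - k → ℓ s = false) then !(ℓ t) else ℓ t

lemma aFun_apply (n k : ℕ) (ℓ : Leaf n) (t : Fin n) :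
    aFun n k ℓ t =
      if (t : ℕ) = n - k ∧ (∀ s : Fin n, (s : ℕ) < n - k → ℓ s = false) then !(ℓ t) else ℓ t :=
  rfl

lemma aFun_spine (n k : ℕ) (ℓ : Leaf n) (s : Fin n) (hs : (s : ℕ) < n - k) :
    aFun n k ℓ s = ℓ s := by
  rw [aFun_apply, if_neg]
  rintro ⟨h1, -⟩
  omega

lemma aFun_cond (n k : ℕ) (ℓ : Leaf n) (t : Fin n) :
    ((t : ℕ) = n - k ∧ (∀ s : Fin n, (s : ℕ) < n - k → aFun n k ℓ s = false)) ↔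
    ((t : ℕ) = n - k ∧ (∀ s : Fin n, (s : ℕ) < n - k → ℓ s = false)) := by
  constructor
  · rintro ⟨h1, h2⟩
    refine ⟨h1, fun s hs => ?_⟩
    have h := h2 s hs
    rwa [aFun_spine n k ℓ s hs] at h
  · rintro ⟨h1, h2⟩
    refine ⟨h1, fun s hs => ?_⟩
    rw [aFun_spine n k ℓ s hs]
    exact h2 s hs

lemma aFun_involutive (n k : ℕ) : Function.Involutive (aFun n k) := by
  intro ℓ
  funext t
  rw [show aFun n k (aFun n k ℓ) t =
    (if (t : ℕ) = n - k ∧ (∀ s : Fin n, (s : ℕ) < n - k → aFun n k ℓ s = false)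
      then !(aFun n k ℓ t) else aFun n k ℓ t) from rfl]
  by_cases h : (t : ℕ) = n - k ∧ (∀ s : Fin n, (s : ℕ) < n - k → ℓ s = false)
  · rw [if_pos ((aFun_cond n k ℓ t).mpr h), aFun_apply, if_pos h, Bool.not_not]
  · rw [if_neg (fun hc => h ((aFun_cond n k ℓ t).mp hc)), aFun_apply, if_neg h]

/-- The standard generator `a_k` of `Aut(T_n)` (as a permutation of the leaves). -/
def aPerm (n k : ℕ) : Equiv.Perm (Leaf n) :=
  Function.Involutive.toPerm (aFun n k) (aFun_involutive n k)

lemma aPerm_apply (n k : ℕ) (ℓ : Leaf n) : aPerm n k ℓ = aFun n k ℓ := rfl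

/-- The automorphism group `W_n` of the complete binary rooted tree of height `n`,
realized as the subgroup of permutations of the `2^n` leaves which, at every level `m`,
map leaves agreeing in their first `m` coordinates to leaves agreeing in their first
`m` coordinates. -/
def treeGroup (n : ℕ) : Subgroup (Equiv.Perm (Leaf n)) where
  carrier := {σ | ∀ m : ℕ, ∀ i j : Leaf n,
    (∀ t : Fin n, (t : ℕ) < m → σ i t = σ j t) ↔ (∀ t : Fin n, (t : ℕ) < m → i t = j t)}
  one_mem' := by intro m i j; simp
  mul_mem' := by
    intro a b ha hb m i j
    simpa [Equiv.Perm.mul_apply] using (ha m (b i) (b j)).trans (hb m i j)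
  inv_mem' := by
    intro a ha m i j
    simpa using (ha m (a⁻¹ i) (a⁻¹ j)).symm

lemma mem_treeGroup (n : ℕ) (σ : Equiv.Perm (Leaf n)) :
    σ ∈ treeGroup n ↔ ∀ m : ℕ, ∀ i j : Leaf n,
      (∀ t : Fin n, (t : ℕ) < m → σ i t = σ j t) ↔ (∀ t : Fin n, (t : ℕ) < m → i t = j t) :=
  Iff.rfl

lemma aPerm_mem (n k : ℕ) : aPerm n k ∈ treeGroup n := by
  have D : ∀ (i j : Leaf n) (m : ℕ), (∀ t : Fin n, (t : ℕ) < m → i t = j t) →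
      (∀ t : Fin n, (t : ℕ) < m → aFun n k i t = aFun n k j t) := by
    intro i j m hij t ht
    rw [aFun_apply, aFun_apply]
    by_cases h1 : (t : ℕ) = n - k
    · have hsp : (∀ s : Fin n, (s : ℕ) < n - k → i s = false) ↔
          (∀ s : Fin n, (s : ℕ) < n - k → j s = false) := by
        constructor
        · intro h s hs
          rw [← hij s (by omega)]; exact h s hs
        · intro h s hs
          rw [hij s (by omega)]; exact h s hs
      by_cases h2 : ∀ s : Fin n, (s : ℕ) < n - k → i s = false
      · rw [if_pos ⟨h1, h2⟩, if_pos ⟨h1, hsp.mp h2⟩, hij t ht]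
      · rw [if_neg (fun hc => h2 hc.2), if_neg (fun hc => h2 (hsp.mpr hc.2)), hij t ht]
    · rw [if_neg (fun hc => h1 hc.1), if_neg (fun hc => h1 hc.1), hij t ht]
  rw [mem_treeGroup]
  intro m i j
  constructor
  · intro h t ht
    have h2 := D (aPerm n k i) (aPerm n k j) m (fun t ht => by
      simpa [aPerm_apply] using h t ht) t ht
    rwa [show aFun n k (aPerm n k i) = i from aFun_involutive n k i,
      show aFun n k (aPerm n k j) = j from aFun_involutive n k j] at h2
  · intro h t ht
    simpa [aPerm_apply] using D i j m h t ht

/-- The standard generator `a_k` as an element of `W_n`. -/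
def aEl (n k : ℕ) : ↥(treeGroup n) := ⟨aPerm n k, aPerm_mem n k⟩

/-- The standard `k`-odometer `x_k = a_1 a_2 ⋯ a_k`, viewed inside `W_n`
(via the natural inclusion of `W_k` acting on the left part of the tree). -/
def xEl (n k : ℕ) : ↥(treeGroup n) :=
  (((List.range k).map fun j => aEl n (j + 1))).prod

/-- `v_i = x_{i+2}^2`, viewed inside `W_n`. -/
def vEl (n i : ℕ) : ↥(treeGroup n) := (xEl n (i + 2)) ^ 2

/-- `m_n = a_{n-1} (x_{n-2})^{x_n}` (with `g^h = h g h⁻¹`), viewed inside `W_n`. -/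
def mEl (n : ℕ) : ↥(treeGroup n) :=
  aEl n (n - 1) * (xEl n n * xEl n (n - 2) * (xEl n n)⁻¹)

/-- A permutation of the leaves of `T_n` is an `n`-odometer if it acts transitively on them. -/
def IsOdometer (n : ℕ) (σ : Equiv.Perm (Leaf n)) : Prop :=
  ∀ i j : Leaf n, ∃ t : ℕ, (σ ^ t) i = j

/-- The generating set `{v_i : i ≤ k - 3}` of `V_k`, inside `W_n`. -/
def VsetK (n k : ℕ) : Set ↥(treeGroup n) := {g | ∃ i : ℕ, i + 3 ≤ k ∧ g = vEl n i}

/-- The subgroup `V_k = ⟨v_{k-3}, …, v_0⟩ ≤ W_n`. -/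
def VgrpK (n k : ℕ) : Subgroup ↥(treeGroup n) := Subgroup.closure (VsetK n k)

/-- The group `M_k = ⟨x_k, v_{k-3}, …, v_0⟩` of Section 4, inside `W_n`. -/
def MgrpK (n k : ℕ) : Subgroup ↥(treeGroup n) :=
  Subgroup.closure (insert (xEl n k) (VsetK n k))

/-- The normal closure `N_k = V_k^{M_k}` of `V_k` in `M_k`, inside `W_n`. -/
def NgrpK (n k : ℕ) : Subgroup ↥(treeGroup n) :=
  Subgroup.closure {g | ∃ m ∈ MgrpK n k, ∃ v ∈ VsetK n k, g = m * v * m⁻¹}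

/-- The group `M_n = ⟨x_n, m_n, v_{n-3}, …, v_0⟩` of Section 5. -/
def MgrpB (n : ℕ) : Subgroup ↥(treeGroup n) :=
  Subgroup.closure (insert (xEl n n) (insert (mEl n) (VsetK n n)))

/-- The normal closure `N_n = ⟨m_n, v_{n-3}, …, v_0⟩^{M_n}` of Section 5. -/
def NgrpB (n : ℕ) : Subgroup ↥(treeGroup n) :=
  Subgroup.closure {g | ∃ m ∈ MgrpB n, ∃ h ∈ insert (mEl n) (VsetK n n), g = m * h * m⁻¹}

/-- `U_n = V_n^{⟨x_n⟩}`. -/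
def Ugrp (n : ℕ) : Subgroup ↥(treeGroup n) :=
  Subgroup.closure {g | ∃ m ∈ Subgroup.closure {xEl n n}, ∃ v ∈ VsetK n n, g = m * v * m⁻¹}

/-!
The inclusion `M_n' ≤ N_n` holds because `N_n` is normalized by `M_n` and contains every
generator of `M_n` except `x_n`, so `M_n / N_n` is cyclic. The inclusion `M_n' ≤ Φ(W_n)` holds
because `W_n` is a finite `2`-group, hence nilpotent: all its maximal subgroups are normal, and a
normal maximal subgroup `K` has cyclic quotient, so it contains `W_n'`.
-/

open Subgroup

section GroupTheory

variable {G : Type*} [Group G]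

theorem Subgroup.commutator_closure_insert_le {x : G} {S : Set G} {K : Subgroup G}
    (hSK : S ⊆ K) (hK : closure (insert x S) ≤ normalizer K) :
    ⁅closure (insert x S), closure (insert x S)⁆ ≤ K := by
  set H := closure (insert x S)
  have : (K.subgroupOf H).Normal :=
    ⟨fun k hk h => mem_subgroupOf.2 ((hK h.2 k).1 (mem_subgroupOf.1 hk))⟩
  have hcyclic : K.subgroupOf H ⊔ zpowers ⟨x, subset_closure (Set.mem_insert x S)⟩ = ⊤ := by
    rw [eq_top_iff, ← closure_closure_coe_preimage, closure_le]
    rintro ⟨y, hyH⟩ (hy | hy)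
    · obtain rfl : y = x := hy
      exact mem_sup_right (mem_zpowers _)
    · exact mem_sup_left (mem_subgroupOf.2 (hSK hy))
  rw [← H.map_subtype_commutator, map_le_iff_le_comap]
  exact Normal.commutator_le_of_self_sup_commutative_eq_top (N := K.subgroupOf H) hcyclic
    inferInstance

theorem Subgroup.le_normalizer_closure_conjugates (H : Subgroup G) (T : Set G) :
    H ≤ normalizer (closure {g | ∃ m ∈ H, ∃ t ∈ T, g = m * t * m⁻¹}) := by
  refine le_normalizer_closure_iff.2 fun h hh g ⟨m, hm, t, ht, hg⟩ => subset_closure ?_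
  exact ⟨h * m, mul_mem hh hm, t, ht, by rw [hg]; group⟩

theorem Subgroup.subset_closure_conjugates (H : Subgroup G) (T : Set G) :
    T ⊆ closure {g | ∃ m ∈ H, ∃ t ∈ T, g = m * t * m⁻¹} :=
  fun t ht => subset_closure ⟨1, one_mem H, t, ht, by group⟩

theorem commutator_le_of_isCoatom {K : Subgroup G} [K.Normal] (hK : IsCoatom K) :
    commutator G ≤ K := by
  obtain ⟨g, hg⟩ : ∃ g, g ∉ K := by
    by_contra! h
    exact hK.1 (eq_top_iff.2 fun g _ => h g)
  have hsup : K ⊔ zpowers g = ⊤ :=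
    hK.2 _ (left_lt_sup.2 fun hle => hg (hle (mem_zpowers g)))
  exact Normal.commutator_le_of_self_sup_commutative_eq_top hsup inferInstance

theorem commutator_le_frattini [Group.IsNilpotent G] : commutator G ≤ frattini G :=
  le_iInf₂ fun K hK =>
    have := Group.normalizerCondition_of_isNilpotent.normal_of_coatom K hK
    commutator_le_of_isCoatom hK

end GroupTheory

section TreeGroup

variable {n : ℕ}

theorem treeGroup_sq_fixes_succ {σ : Equiv.Perm (Leaf n)} (hσ : σ ∈ treeGroup n) {m : ℕ}
    (hm : ∀ ℓ (t : Fin n), (t : ℕ) < m → σ ℓ t = ℓ t) :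
    ∀ ℓ (t : Fin n), (t : ℕ) < m + 1 → (σ ^ 2) ℓ t = ℓ t := by
  intro ℓ t ht
  rw [sq, Equiv.Perm.mul_apply]
  rcases Nat.lt_succ_iff_lt_or_eq.1 ht with ht | ht
  · rw [hm _ t ht, hm _ t ht]
  have hlevel : ∀ i j : Leaf n, (∀ s : Fin n, (s : ℕ) < m → i s = j s) →
      ((∀ s : Fin n, (s : ℕ) < m + 1 → i s = j s) ↔ i t = j t) := by
    refine fun i j hij => ⟨fun h => h t (by omega), fun h s hs => ?_⟩
    rcases Nat.lt_succ_iff_lt_or_eq.1 hs with hs | hs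
    · exact hij s hs
    · rwa [Fin.ext (hs.trans ht.symm)]
  have hmoves : σ (σ ℓ) t = σ ℓ t ↔ σ ℓ t = ℓ t := by
    rw [← hlevel _ _ fun s hs => hm _ s hs, ← hlevel _ _ fun s hs => hm _ s hs]
    exact hσ (m + 1) (σ ℓ) ℓ
  -- on bits, `(a = b ↔ b = c) → a = c`
  generalize σ (σ ℓ) t = a, σ ℓ t = b, ℓ t = c at hmoves ⊢
  revert a b c
  decide

theorem treeGroup_pow_two_pow_fixes {σ : Equiv.Perm (Leaf n)} (hσ : σ ∈ treeGroup n) (m : ℕ) :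
    ∀ ℓ (t : Fin n), (t : ℕ) < m → (σ ^ 2 ^ m) ℓ t = ℓ t := by
  induction m with
  | zero => intro ℓ t ht; omega
  | succ m ih =>
    rw [pow_succ, pow_mul]
    exact treeGroup_sq_fixes_succ (pow_mem hσ _) ih

theorem treeGroup_isPGroup (n : ℕ) : IsPGroup 2 (treeGroup n) := fun g =>
  ⟨n, Subtype.ext <| Equiv.ext fun ℓ => funext fun t => by
    simpa using treeGroup_pow_two_pow_fixes g.2 n ℓ t t.isLt⟩

instance (n : ℕ) : Group.IsNilpotent (treeGroup n) :=
  have : Fact (Nat.Prime 2) := ⟨Nat.prime_two⟩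
  (treeGroup_isPGroup n).isNilpotent

end TreeGroup

theorem commutator_le_Nod_general (n : ℕ) :
    ⁅MgrpB n, MgrpB n⁆ ≤ NgrpB n ⊓ frattini ↥(treeGroup n) := by
  refine le_inf ?_ ?_
  · exact commutator_closure_insert_le (subset_closure_conjugates _ _)
      (le_normalizer_closure_conjugates _ _)
  · calc ⁅MgrpB n, MgrpB n⁆ ≤ commutator (treeGroup n) := commutator_mono le_top le_top
      _ ≤ frattini (treeGroup n) := commutator_le_frattini

/-- for `n ≥ 3`, with `M_n = ⟨x_n, m_n, v_{n-3}, …, v_0⟩` and `N_n` the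
normal closure of `⟨m_n, v_{n-3}, …, v_0⟩` in `M_n`, the commutator subgroup `M_n'` is
contained in `N_n^od = N_n ∩ Φ(W_n)`. -/
theorem commutator_le_Nod (n : ℕ) (hn : 3 ≤ n) :
    ⁅MgrpB n, MgrpB n⁆ ≤ NgrpB n ⊓ frattini ↥(treeGroup n) :=
  commutator_le_Nod_general n
end

section
/- In $W_n$, the elements $m_n$ defined by $m_1 = 1$, $m_2 = a_1$, and the recursion arising from the Markov map satisfy $m_{n+1} = x_n^2 m_n x_n^{-1}$ for all $n \geq 1$. -/
/-- The auxiliary sequence `β_j = α_{j+3}` with `α_3 = 1` and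
`α_{n+1} = (x_{n-3} α_n)^{a_{n-1}}` (conjugation `g^h = h g h⁻¹`). -/
def betaSeq (N : ℕ) : ℕ → ↥(treeGroup N)
  | 0 => 1
  | j + 1 => aEl N (j + 2) * (xEl N j * betaSeq N j) * (aEl N (j + 2))⁻¹

/-- The sequence `m_n` of Section 6: `m_1 = 1`, `m_2 = a_1`, and
`m_n = x_{n-3} α_n a_{n-1}` for `n ≥ 3`. -/
def mSeq (N : ℕ) : ℕ → ↥(treeGroup N)
  | 0 => 1
  | 1 => 1
  | 2 => aEl N 1
  | j + 3 => xEl N j * betaSeq N j * aEl N (j + 2)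

/-!
Write `x_n = x_{n-1} a_n`. Unwinding the definitions gives `m_{n+1} = x_{n-1} m_n a_n`, and in any
group `(X B)² τ (X B)⁻¹ = X τ B` as soon as `B X B` commutes with `τ`. Inside `W_{n+1}` both
`x_{n-1}` and `m_n` act only on the subtree below the leftmost vertex of level 2, and the involution
`a_n` swaps that subtree with its sibling, so `a_n x_{n-1} a_n` and `m_n` have disjoint supports.
-/

lemma aEl_mul_self (N k : ℕ) : aEl N k * aEl N k = 1 :=
  Subtype.ext (Equiv.ext fun ℓ => aFun_involutive N k ℓ)

lemma aEl_inv (N k : ℕ) : (aEl N k)⁻¹ = aEl N k :=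
  inv_eq_of_mul_eq_one_left (aEl_mul_self N k)

lemma xEl_zero (N : ℕ) : xEl N 0 = 1 := rfl

lemma xEl_succ (N k : ℕ) : xEl N (k + 1) = xEl N k * aEl N (k + 1) := by
  simp [xEl, List.range_succ]

lemma mSeq_add_two (N k : ℕ) :
    mSeq N (k + 2) = xEl N k * mSeq N (k + 1) * aEl N (k + 1) := by
  match k with
  | 0 => simp [mSeq, xEl_zero]
  | 1 => simp [mSeq, betaSeq, xEl_zero, xEl_succ, aEl_mul_self]
  | j + 2 => simp only [mSeq, betaSeq, xEl_succ, aEl_inv, mul_assoc]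

def leftSubtree (N d : ℕ) : Set (Leaf N) := {ℓ | ∀ t : Fin N, (t : ℕ) < d → ℓ t = false}

def leftRist (N d : ℕ) : Subgroup (treeGroup N) := fixingSubgroup (treeGroup N) (leftSubtree N d)ᶜ

lemma mem_leftRist_iff {N d : ℕ} {g : treeGroup N} :
    g ∈ leftRist N d ↔ ∀ ℓ ∉ leftSubtree N d, (g : Equiv.Perm (Leaf N)) ℓ = ℓ :=
  mem_fixingSubgroup_iff _

lemma aEl_mem_leftRist {N d k : ℕ} (h : d + k ≤ N) : aEl N k ∈ leftRist N d := by
  simp only [mem_leftRist_iff, leftSubtree, Set.mem_ofPred_eq, not_forall]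
  rintro ℓ ⟨t, ht, hℓt⟩
  funext u
  rw [aEl, aPerm_apply, aFun_apply, if_neg]
  rintro ⟨-, hspine⟩
  exact hℓt (hspine t (by omega))

lemma xEl_mem_leftRist {N d : ℕ} : ∀ {k : ℕ}, d + k ≤ N → xEl N k ∈ leftRist N d
  | 0, _ => one_mem _
  | k + 1, h => by
    rw [xEl_succ]
    exact mul_mem (xEl_mem_leftRist (by omega)) (aEl_mem_leftRist h)

lemma mSeq_mem_leftRist {N d : ℕ} : ∀ {n : ℕ}, d + n ≤ N + 1 → mSeq N n ∈ leftRist N d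
  | 0, _ | 1, _ => one_mem _
  | k + 2, h => by
    rw [mSeq_add_two]
    exact mul_mem (mul_mem (xEl_mem_leftRist (by omega)) (mSeq_mem_leftRist (by omega)))
      (aEl_mem_leftRist (by omega))

lemma aPerm_not_mem_leftSubtree {N d : ℕ} (hd : d < N) {ℓ : Leaf N}
    (hℓ : ℓ ∈ leftSubtree N (d + 1)) : aPerm N (N - d) ℓ ∉ leftSubtree N (d + 1) := by
  intro h
  have hflip : aPerm N (N - d) ℓ ⟨d, hd⟩ = !(ℓ ⟨d, hd⟩) := by
    rw [aPerm_apply, aFun_apply, if_pos ⟨(Nat.sub_sub_self hd.le).symm, fun s hs => hℓ s (by omega)⟩]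
  rw [h _ d.lt_succ_self, hℓ _ d.lt_succ_self] at hflip
  exact Bool.false_ne_true hflip

lemma commute_aEl_conj_of_mem_leftRist {N d : ℕ} (hd : d < N) {σ τ : treeGroup N}
    (hσ : σ ∈ leftRist N (d + 1)) (hτ : τ ∈ leftRist N (d + 1)) :
    Commute (aEl N (N - d) * σ * aEl N (N - d)) τ := by
  rw [mem_leftRist_iff] at hσ hτ
  refine Subtype.ext (Equiv.Perm.Disjoint.commute fun ℓ => ?_)
  by_cases hℓ : ℓ ∈ leftSubtree N (d + 1)
  · left
    change aPerm N (N - d) ((σ : Equiv.Perm (Leaf N)) (aPerm N (N - d) ℓ)) = ℓ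
    rw [hσ _ (aPerm_not_mem_leftSubtree hd hℓ)]
    exact aFun_involutive _ _ ℓ
  · exact Or.inr (hτ ℓ hℓ)

lemma mul_sq_mul_mul_inv_eq_of_commute {G : Type*} [Group G] {X B τ : G}
    (h : Commute (B * X * B) τ) : (X * B) ^ 2 * τ * (X * B)⁻¹ = X * τ * B := by
  have h := h.eq
  rw [mul_inv_eq_iff_eq_mul, sq]
  simp only [mul_assoc] at h ⊢
  rw [h]

/-- the elements `m_n` satisfy `m_{n+1} = x_n² m_n x_n⁻¹` for all `n ≥ 1`
(the identity being read in `W_{n+1}`). -/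
theorem mSeq_rec (n : ℕ) (hn : 1 ≤ n) :
    mSeq (n + 1) (n + 1) = (xEl (n + 1) n) ^ 2 * mSeq (n + 1) n * (xEl (n + 1) n)⁻¹ := by
  obtain ⟨k, rfl⟩ := Nat.exists_eq_add_of_le' hn
  rw [mSeq_add_two, xEl_succ, mul_sq_mul_mul_inv_eq_of_commute]
  exact commute_aEl_conj_of_mem_leftRist (N := k + 2) (d := 1) (by omega)
    (xEl_mem_leftRist (by omega)) (mSeq_mem_leftRist (by omega))
end

section
/- Let $f(x) \in \mathbb{Z}[x]$ be a monic quadratic polynomial that is post-critically finite (its critical orbit $\{f(c), f^2(c), \dots\}$ is finite, where $c$ is the critical point). Then $f$ is conjugate by a translation $x \mapsto x + a$ with $a \in \mathbb{Z}$ to one of $x^2$, $x^2 - 1$, or $x^2 - 2$. -/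
private def Sseq (t : ℤ) : ℕ → ℤ
  | 0 => 0
  | k + 1 => (Sseq t k) ^ 2 + t

private lemma Sseq_step (t S : ℤ) (h3 : t ≤ -3 ∨ 1 ≤ t) (h1 : 1 ≤ S) (h2 : -t ≤ S) :
    1 ≤ S ^ 2 + t ∧ -t ≤ S ^ 2 + t ∧ S < S ^ 2 + t := by
  rcases h3 with h | h
  · refine ⟨by nlinarith, by nlinarith, by nlinarith⟩
  · refine ⟨by nlinarith, by nlinarith, by nlinarith⟩

private lemma Sseq_inv (t : ℤ) (h3 : t ≤ -3 ∨ 1 ≤ t) :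
    ∀ k, 1 ≤ Sseq t (k + 2) ∧ -t ≤ Sseq t (k + 2) ∧ Sseq t (k + 2) < Sseq t (k + 3) := by
  have base1 : 1 ≤ Sseq t 2 ∧ -t ≤ Sseq t 2 := by
    have : Sseq t 2 = t ^ 2 + t := by simp [Sseq]
    rw [this]
    rcases h3 with h | h
    · exact ⟨by nlinarith, by nlinarith⟩
    · exact ⟨by nlinarith, by nlinarith⟩
  intro k
  induction k with
  | zero =>
      refine ⟨base1.1, base1.2, ?_⟩
      have := Sseq_step t (Sseq t 2) h3 base1.1 base1.2
      have h4 : Sseq t 3 = (Sseq t 2) ^ 2 + t := rfl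
      rw [h4]; exact this.2.2
  | succ n ih =>
      have h4 : Sseq t (n + 3) = (Sseq t (n + 2)) ^ 2 + t := rfl
      have step := Sseq_step t (Sseq t (n + 2)) h3 ih.1 ih.2.1
      have h5 : Sseq t (n + 4) = (Sseq t (n + 3)) ^ 2 + t := rfl
      refine ⟨by rw [h4]; exact step.1, by rw [h4]; exact step.2.1, ?_⟩
      rw [h5]
      have step2 := Sseq_step t (Sseq t (n + 3)) h3 (by rw [h4]; exact step.1)
        (by rw [h4]; exact step.2.1)
      exact step2.2.2

/-- a monic quadratic `f(x) = x² + bx + d ∈ ℤ[x]` which is post-critically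
finite (the forward orbit of its critical point `c = -b/2` is finite) is conjugate by a
translation `x ↦ x + a`, `a ∈ ℤ`, to one of `x²`, `x² - 1`, `x² - 2`. -/
theorem pcf_integer_quadratic_classification (b d : ℤ) (f : ℚ → ℚ)
    (hf : ∀ x : ℚ, f x = x ^ 2 + (b : ℚ) * x + (d : ℚ))
    (hpcf : {y : ℚ | ∃ k : ℕ, 1 ≤ k ∧ y = f^[k] (-(b : ℚ) / 2)}.Finite) :
    ∃ a : ℤ,
      (∀ x : ℚ, f (x + (a : ℚ)) - (a : ℚ) = x ^ 2) ∨
      (∀ x : ℚ, f (x + (a : ℚ)) - (a : ℚ) = x ^ 2 - 1) ∨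
      (∀ x : ℚ, f (x + (a : ℚ)) - (a : ℚ) = x ^ 2 - 2) := by
  set c0 : ℚ := -(b : ℚ) / 2 with hc0
  -- Step A: b is even
  have hbeven : ∃ m : ℤ, b = 2 * m := by
    rcases Int.even_or_odd b with he | ho
    · obtain ⟨r, hr⟩ := he; exact ⟨r, by omega⟩
    · exfalso
      -- if b is odd, denominators of the orbit blow up
      have key : ∀ k : ℕ, ∃ u : ℤ, Odd u ∧ f^[k + 1] c0 = (u : ℚ) / 2 ^ (2 ^ (k + 1)) := by
        intro k
        induction k with
        | zero =>
            refine ⟨4 * d - b ^ 2, ?_, ?_⟩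
            · rcases ho with ⟨j, hj⟩
              refine ⟨2 * d - 2 * j ^ 2 - 2 * j - 1, by rw [hj]; ring⟩
            · rw [Function.iterate_one, hf, hc0]
              push_cast
              norm_num
              ring
        | succ n ih =>
            obtain ⟨u, hu, heq⟩ := ih
            set E : ℤ := 2 ^ (2 ^ (n + 1)) with hE
            refine ⟨u ^ 2 + (b * u * E + d * E ^ 2), ?_, ?_⟩
            · have hEeven : Even E := by
                rw [hE]
                exact (Int.even_pow).mpr ⟨even_two, by positivity⟩
              have hE2 : Even (E ^ 2) := (Int.even_pow).mpr ⟨hEeven, two_ne_zero⟩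
              exact (hu.pow).add_even ((hEeven.mul_left (b * u)).add (hE2.mul_left d))
            · rw [Function.iterate_succ_apply', heq, hf]
              have hexp : (2 : ℕ) ^ (n + 2) = 2 ^ (n + 1) * 2 := by ring
              rw [hexp, pow_mul]
              have h2 : ((2 : ℚ) ^ (2 ^ (n + 1))) ≠ 0 := by positivity
              field_simp
              push_cast [hE]
              ring
      -- distinct orbit points
      have hne : ∀ j k : ℕ, j < k → f^[j + 1] c0 ≠ f^[k + 1] c0 := by
        intro j k hjk heq
        obtain ⟨uj, huj, hj⟩ := key j
        obtain ⟨uk, huk, hk⟩ := key k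
        rw [hj, hk] at heq
        have hjq : (uj : ℚ) * 2 ^ (2 ^ (k + 1)) = (uk : ℚ) * 2 ^ (2 ^ (j + 1)) := by
          field_simp at heq
          linarith [heq]
        have hz : uj * 2 ^ (2 ^ (k + 1)) = uk * 2 ^ (2 ^ (j + 1)) := by
          exact_mod_cast hjq
        have hlt : 2 ^ (j + 1) < 2 ^ (k + 1) := Nat.pow_lt_pow_right one_lt_two (by omega)
        obtain ⟨n, hn⟩ : ∃ n : ℕ, 2 ^ (k + 1) = 2 ^ (j + 1) + (n + 1) :=
          ⟨2 ^ (k + 1) - 2 ^ (j + 1) - 1, by omega⟩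
        rw [hn, pow_add] at hz
        have hcancel : uj * 2 ^ (n + 1) = uk := by
          have h2 : ((2 : ℤ) ^ (2 ^ (j + 1))) ≠ 0 := by positivity
          have : (2 : ℤ) ^ (2 ^ (j + 1)) * (uj * 2 ^ (n + 1)) = 2 ^ (2 ^ (j + 1)) * uk := by
            ring_nf
            ring_nf at hz
            linarith [hz]
          exact mul_left_cancel₀ h2 this
        have heven : Even uk := by
          rw [← hcancel]
          exact ((Int.even_pow).mpr ⟨even_two, by omega⟩).mul_left uj
        exact (Int.not_odd_iff_even.mpr heven) huk
      have hinj : Function.Injective (fun k : ℕ => f^[k + 1] c0) := by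
        intro j k h
        by_contra hne'
        rcases lt_trichotomy j k with h1 | h1 | h1
        · exact hne j k h1 h
        · exact hne' h1
        · exact hne k j h1 h.symm
      have hmem : ∀ k : ℕ, f^[k + 1] c0 ∈ {y : ℚ | ∃ k : ℕ, 1 ≤ k ∧ y = f^[k] (-(b : ℚ) / 2)} := by
        intro k
        exact ⟨k + 1, by omega, by rw [hc0]⟩
      exact (Set.infinite_of_injective_forall_mem hinj hmem) hpcf
  obtain ⟨m, hm⟩ := hbeven
  set t : ℤ := d + m - m ^ 2 with ht
  -- orbit equals integer sequence
  have hy : ∀ k : ℕ, f^[k] c0 = ((Sseq t k : ℤ) : ℚ) - (m : ℚ) := by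
    intro k
    induction k with
    | zero =>
        simp [Sseq, hc0, hm]
        push_cast
        ring
    | succ n ih =>
        rw [Function.iterate_succ_apply', ih, hf]
        have : Sseq t (n + 1) = (Sseq t n) ^ 2 + t := rfl
        rw [this, hm, ht]
        push_cast
        ring
  -- t must be 0, -1, or -2
  have htv : t = 0 ∨ t = -1 ∨ t = -2 := by
    by_contra hcon
    push_neg at hcon
    have h3 : t ≤ -3 ∨ 1 ≤ t := by omega
    have hSmono : StrictMono (fun k : ℕ => Sseq t (k + 2)) :=
      strictMono_nat_of_lt_succ (fun k => (Sseq_inv t h3 k).2.2)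
    have hTmono : StrictMono (fun k : ℕ => ((Sseq t (k + 2) : ℤ) : ℚ) - (m : ℚ)) := by
      apply strictMono_nat_of_lt_succ
      intro k
      have h1 := (Sseq_inv t h3 k).2.2
      have h2 : ((Sseq t (k + 2) : ℤ) : ℚ) < ((Sseq t (k + 3) : ℤ) : ℚ) := by exact_mod_cast h1
      simpa using h2
    have hinj := hTmono.injective
    have hmem : ∀ k : ℕ, ((Sseq t (k + 2) : ℤ) : ℚ) - (m : ℚ) ∈
        {y : ℚ | ∃ k : ℕ, 1 ≤ k ∧ y = f^[k] (-(b : ℚ) / 2)} := by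
      intro k
      exact ⟨k + 2, by omega, by rw [← hc0, hy]⟩
    exact (Set.infinite_of_injective_forall_mem hinj hmem) hpcf
  refine ⟨-m, ?_⟩
  have hb : (b : ℚ) = 2 * (m : ℚ) := by exact_mod_cast hm
  rcases htv with h | h | h
  · left
    intro x
    have hd : (d : ℚ) = (m : ℚ) ^ 2 - m := by
      have : d = m ^ 2 - m := by omega
      exact_mod_cast this
    rw [hf, hb, hd]; push_cast; ring
  · right; left
    intro x
    have hd : (d : ℚ) = (m : ℚ) ^ 2 - m - 1 := by
      have : d = m ^ 2 - m - 1 := by omega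
      exact_mod_cast this
    rw [hf, hb, hd]; push_cast; ring
  · right; right
    intro x
    have hd : (d : ℚ) = (m : ℚ) ^ 2 - m - 2 := by
      have : d = m ^ 2 - m - 2 := by omega
      exact_mod_cast this
    rw [hf, hb, hd]; push_cast; ring
end
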